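/- arXiv:0911.2385 — 5 statements merged into one kernel-verified Lean document; each statement's English description precedes it below -/
import Mathlib

section
/- For every real number α > 1 there exists a finite constant M(α) such that the supremum over all even L ∈ ℕ of the expectation E_W[(r^L · τ_1^{(L)})^α] is at most M(α); in particular this supremum is finite. -/
/-
Cut time into blocks of length `2L`. Block `k` succeeds if the word `0 + − ⋯ + −` (a `0`
followed by the alternating word) starts at one of the `L/2` positions `2Lk + 2i + 1`, `i < L/2`.
Two such occurrences are disjoint events, since the `0` of the later one would fall on a `−` of
the earlier one; so block `k` succeeds with probability exactly `ρ = (L/2) p r^L`, independently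
of the other blocks, and then `τ₁ ≤ 2L(k+1)`. As `2p ≥ 1`, this gives `r^L τ₁ ≤ 8ρN` with `N`
geometric of parameter `ρ`, and `E[(ρN)^α]` is bounded uniformly in `ρ ∈ (0, 1]` because
`x^α ≤ (2α)^α e^{x/2}`.
-/

open Function MeasureTheory ProbabilityTheory Set
open scoped ENNReal

/-- The alternating pattern `(+, −, +, −, …)`: `0` codes `+`, `1` codes `−`, `2` codes `0`. -/
def altPat (j : ℕ) : Fin 3 := if j % 2 = 0 then 0 else 1

/-- The first regeneration time `τ₁^{(L)}`:
the first `n > L` such that `(ε_{n−L}, …, ε_{n−1})` equals the alternating word of length `L`. -/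
noncomputable def tau1 (L : ℕ) (ε : ℕ → Fin 3) : ℕ :=
  sInf {n : ℕ | L < n ∧ ∀ j < L, ε (n - L + j) = altPat j}

section Independence

variable {ι β : Type*} [MeasurableSpace β] {μ : Measure (ι → β)}

lemma measure_inter_eq_mul_of_dependsOn [Nonempty β]
    (hμ : iIndepFun (fun i (x : ι → β) => x i) μ) {S T : Finset ι} (hST : Disjoint S T)
    {C D : Set (ι → β)} (hC : MeasurableSet C) (hD : MeasurableSet D)
    (hCS : DependsOn (· ∈ C) (S : Set ι)) (hDT : DependsOn (· ∈ D) (T : Set ι)) :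
    μ (C ∩ D) = μ C * μ D := by
  classical
  let extend (R : Finset ι) (y : R → β) (i : ι) : β :=
    if h : i ∈ R then y ⟨i, h⟩ else Classical.arbitrary β
  have measurable_extend (R : Finset ι) : Measurable (extend R) :=
    measurable_pi_lambda _ fun i => by
      by_cases h : i ∈ R
      · simpa [extend, h] using measurable_pi_apply (⟨i, h⟩ : R)
      · simp [extend, h]
  have preimage_extend {R : Finset ι} {E : Set (ι → β)} (hE : DependsOn (· ∈ E) (R : Set ι)) :
      (fun x (i : R) => x i) ⁻¹' (extend R ⁻¹' E) = E := by
    ext x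
    exact Iff.of_eq (hE fun i hi => by simp [extend, Finset.mem_coe.1 hi])
  have h := (hμ.indepFun_finset S T hST measurable_pi_apply).measure_inter_preimage_eq_mul _ _
    (measurable_extend S hC) (measurable_extend T hD)
  rwa [preimage_extend hCS, preimage_extend hDT] at h

end Independence

section Trials

variable {Ω : Type*} [MeasurableSpace Ω] {μ : Measure Ω}

lemma lintegral_le_tsum_mul_measure_disjointed {S : ℕ → Set Ω} (hS : ∀ k, MeasurableSet (S k))
    (hcover : ∀ᵐ ω ∂μ, ∃ k, ω ∈ S k) {f : Ω → ℝ≥0∞} {c : ℕ → ℝ≥0∞}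
    (hf : ∀ k, ∀ ω ∈ disjointed S k, f ω ≤ c k) :
    ∫⁻ ω, f ω ∂μ ≤ ∑' k, c k * μ (disjointed S k) := by
  have hrestrict : μ.restrict (⋃ k, disjointed S k) = μ :=
    Measure.restrict_eq_self_of_ae_mem (by simpa [iUnion_disjointed] using hcover)
  calc ∫⁻ ω, f ω ∂μ = ∑' k, ∫⁻ ω in disjointed S k, f ω ∂μ := by
        rw [← lintegral_iUnion (MeasurableSet.disjointed hS) (disjoint_disjointed S), hrestrict]
    _ ≤ ∑' k, ∫⁻ _ in disjointed S k, c k ∂μ :=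
        ENNReal.tsum_le_tsum fun k => setLIntegral_mono measurable_const (hf k)
    _ = ∑' k, c k * μ (disjointed S k) := by simp_rw [setLIntegral_const]

end Trials

structure BlockDetermined {ι β : Type*} [MeasurableSpace β] (μ : Measure (ι → β))
    (S : ℕ → Set (ι → β)) (T : ℕ → Finset ι) : Prop where
  iIndepFun_eval : iIndepFun (fun i (x : ι → β) => x i) μ
  pairwise_disjoint : Pairwise (Disjoint on T)
  measurableSet : ∀ k, MeasurableSet (S k)
  dependsOn : ∀ k, DependsOn (· ∈ S k) (T k : Set ι)

namespace BlockDetermined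

variable {ι β : Type*} [MeasurableSpace β] [Nonempty β] {μ : Measure (ι → β)}
  {S : ℕ → Set (ι → β)} {T : ℕ → Finset ι} {s : ℝ≥0∞}

lemma measure_biInter_lt_compl_inter (h : BlockDetermined μ S T) {k : ℕ} {D : Set (ι → β)}
    (hD : MeasurableSet D) (hDT : DependsOn (· ∈ D) (T k : Set ι)) :
    μ ((⋂ j < k, (S j)ᶜ) ∩ D) = μ (⋂ j < k, (S j)ᶜ) * μ D := by
  classical
  refine measure_inter_eq_mul_of_dependsOn h.iIndepFun_eval (S := (Finset.range k).biUnion T)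
    ?_ (.biInter (to_countable _) fun j _ => (h.measurableSet j).compl) hD ?_ hDT
  · exact (Finset.disjoint_biUnion_left _ _ _).2 fun j hj =>
      h.pairwise_disjoint (Finset.mem_range.1 hj).ne
  · intro x y hxy
    simp only [mem_iInter, mem_compl_iff, eq_iff_iff]
    refine forall₂_congr fun j hj => not_congr (Iff.of_eq (h.dependsOn j fun i hi => hxy i ?_))
    simpa using ⟨j, hj, hi⟩

variable [IsProbabilityMeasure μ]

lemma measure_biInter_lt_compl (h : BlockDetermined μ S T) (hs : ∀ k, μ (S k) = s) (k : ℕ) :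
    μ (⋂ j < k, (S j)ᶜ) = (1 - s) ^ k := by
  induction k with
  | zero => simp
  | succ k ih =>
    have hSc : DependsOn (· ∈ (S k)ᶜ) (T k : Set ι) := fun x y hxy =>
      congrArg Not (h.dependsOn k hxy)
    rw [biInter_lt_succ, h.measure_biInter_lt_compl_inter (h.measurableSet k).compl hSc, ih,
      prob_compl_eq_one_sub (h.measurableSet k), hs, pow_succ]

lemma measure_disjointed (h : BlockDetermined μ S T) (hs : ∀ k, μ (S k) = s) (k : ℕ) :
    μ (disjointed S k) = (1 - s) ^ k * s := by
  rw [disjointed_eq_inter_compl, inter_comm,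
    h.measure_biInter_lt_compl_inter (h.measurableSet k) (h.dependsOn k),
    h.measure_biInter_lt_compl hs, hs]

lemma ae_exists_mem (h : BlockDetermined μ S T) (hs : ∀ k, μ (S k) = s) (hs0 : s ≠ 0) :
    ∀ᵐ x ∂μ, ∃ k, x ∈ S k := by
  have hlt : 1 - s < 1 := ENNReal.sub_lt_self ENNReal.one_ne_top one_ne_zero hs0
  have hnull : μ (⋂ k, (S k)ᶜ) = 0 := by
    refine le_antisymm (ge_of_tendsto' (ENNReal.tendsto_pow_atTop_nhds_zero_of_lt_one hlt)
      fun k => ?_) bot_le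
    rw [← h.measure_biInter_lt_compl hs k]
    exact measure_mono (iInter_subset_iInter₂ ..)
  rw [ae_iff]
  convert hnull
  ext
  simp

end BlockDetermined

lemma pairwise_disjoint_Ico_mul (c : ℕ) :
    Pairwise (Disjoint on fun k : ℕ => Finset.Ico (c * k) (c * (k + 1))) := fun k k' hne => by
  simpa [← Finset.disjoint_coe] using
    Monotone.pairwise_disjoint_on_Ico_succ (f := (c * ·)) (fun _ _ h => Nat.mul_le_mul_left c h) hne

section Words

variable {β : Type*}

def matchesAt (u : ℕ → β) (len b : ℕ) : Set (ℕ → β) := {x | ∀ j < len, x (b + j) = u j}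

lemma matchesAt_eq_biInter (u : ℕ → β) (len b : ℕ) :
    matchesAt u len b = ⋂ j ∈ Finset.range len, (fun x : ℕ → β => x (b + j)) ⁻¹' {u j} := by
  ext; simp [matchesAt]

lemma dependsOn_matchesAt (u : ℕ → β) (len b : ℕ) :
    DependsOn (· ∈ matchesAt u len b) (Finset.Ico b (b + len) : Set ℕ) := fun x y hxy => by
  refine propext (forall₂_congr fun j hj => ?_)
  rw [hxy (b + j) (by simp; omega)]

variable [MeasurableSpace β] [MeasurableSingletonClass β]

lemma measurableSet_matchesAt (u : ℕ → β) (len b : ℕ) : MeasurableSet (matchesAt u len b) := by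
  rw [matchesAt_eq_biInter]
  exact .biInter (to_countable _) fun j _ => measurable_pi_apply _ (measurableSet_singleton _)

lemma measure_matchesAt {μ : Measure (ℕ → β)} {ν : Measure β}
    (hμ : iIndepFun (fun i (x : ℕ → β) => x i) μ) (hν : ∀ i, μ.map (fun x => x i) = ν)
    (u : ℕ → β) (len b : ℕ) :
    μ (matchesAt u len b) = ∏ j ∈ Finset.range len, ν {u j} := by
  rw [matchesAt_eq_biInter, (hμ.precomp (add_right_injective b)).meas_biInter
    fun j _ => ⟨{u j}, measurableSet_singleton _, rfl⟩]
  refine Finset.prod_congr rfl fun j _ => ?_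
  rw [← hν (b + j), Measure.map_apply (measurable_pi_apply _) (measurableSet_singleton _)]

end Words

def markedAlt (j : ℕ) : Fin 3 := if j = 0 then 2 else altPat (j - 1)

lemma disjoint_matchesAt_markedAlt {L b b' : ℕ} (hlt : b < b') (hle : b' ≤ b + L)
    (heven : Even (b' - b)) :
    Disjoint (matchesAt markedAlt (L + 1) b) (matchesAt markedAlt (L + 1) b') := by
  refine disjoint_left.2 fun x hx hx' => ?_
  have h := hx' 0 (by omega)
  obtain ⟨c, hc⟩ := heven
  rw [add_zero, ← Nat.add_sub_cancel' hlt.le, hx (b' - b) (by omega)] at h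
  simp [markedAlt, altPat, show b' - b ≠ 0 by omega, show (b' - b - 1) % 2 = 1 by omega] at h

lemma tau1_le_of_mem_matchesAt_markedAlt {L b : ℕ} {x : ℕ → Fin 3}
    (hx : x ∈ matchesAt markedAlt (L + 1) b) : tau1 L x ≤ b + L + 1 := by
  refine Nat.sInf_le ⟨by omega, fun j hj => ?_⟩
  have h := hx (j + 1) (by omega)
  rwa [show b + (j + 1) = b + L + 1 - L + j by omega] at h

def blockSuccess (L k : ℕ) : Set (ℕ → Fin 3) :=
  ⋃ i ∈ Finset.range (L / 2), matchesAt markedAlt (L + 1) (2 * L * k + 2 * i + 1)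

lemma measurableSet_blockSuccess (L k : ℕ) : MeasurableSet (blockSuccess L k) :=
  .biUnion (to_countable _) fun _ _ => measurableSet_matchesAt _ _ _

lemma tau1_le_of_mem_blockSuccess {L k : ℕ} {x : ℕ → Fin 3} (hx : x ∈ blockSuccess L k) :
    tau1 L x ≤ 2 * L * (k + 1) := by
  simp only [blockSuccess, mem_iUnion, Finset.mem_range] at hx
  obtain ⟨i, hi, hx⟩ := hx
  have := tau1_le_of_mem_matchesAt_markedAlt hx
  rw [mul_add]; omega

lemma dependsOn_blockSuccess (L k : ℕ) :
    DependsOn (· ∈ blockSuccess L k) (Finset.Ico (2 * L * k) (2 * L * (k + 1)) : Set ℕ) := by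
  intro x y hxy
  simp only [blockSuccess, mem_iUnion, Finset.mem_range, eq_iff_iff]
  refine exists_congr fun i => exists_congr fun hi => Iff.of_eq <|
    dependsOn_matchesAt _ _ _ fun n hn => hxy n ?_
  simp only [Finset.coe_Ico, mem_Ico] at hn ⊢
  rw [mul_add]; omega

lemma measure_blockSuccess {W : Measure (ℕ → Fin 3)} {w : Measure (Fin 3)} {p r : ℝ}
    (hiid : iIndepFun (fun i (x : ℕ → Fin 3) => x i) W) (hmarg : ∀ i, W.map (fun x => x i) = w)
    (hw0 : w {0} = ENNReal.ofReal r) (hw1 : w {1} = ENNReal.ofReal r)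
    (hw2 : w {2} = ENNReal.ofReal p) (L k : ℕ) :
    W (blockSuccess L k) = (L / 2 : ℕ) * (ENNReal.ofReal p * ENNReal.ofReal r ^ L) := by
  have hdisj : PairwiseDisjoint (Finset.range (L / 2) : Set ℕ)
      fun i => matchesAt markedAlt (L + 1) (2 * L * k + 2 * i + 1) := by
    intro i hi i' hi' hne
    simp only [Finset.coe_range, mem_Iio] at hi hi'
    rcases hne.lt_or_gt with h | h
    · exact disjoint_matchesAt_markedAlt (by omega) (by omega) ⟨i' - i, by omega⟩
    · exact (disjoint_matchesAt_markedAlt (by omega) (by omega) ⟨i - i', by omega⟩).symm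
  have hword (j : ℕ) : w {altPat j} = ENNReal.ofReal r := by
    unfold altPat; split_ifs <;> assumption
  rw [blockSuccess, measure_biUnion_finset hdisj fun _ _ => measurableSet_matchesAt _ _ _]
  simp_rw [measure_matchesAt hiid hmarg, Finset.prod_range_succ', markedAlt]
  simp [hw2, hword, mul_comm]

lemma blockDetermined_blockSuccess {W : Measure (ℕ → Fin 3)}
    (hiid : iIndepFun (fun i (x : ℕ → Fin 3) => x i) W) (L : ℕ) :
    BlockDetermined W (blockSuccess L) fun k => Finset.Ico (2 * L * k) (2 * L * (k + 1)) :=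
  ⟨hiid, pairwise_disjoint_Ico_mul (2 * L), measurableSet_blockSuccess L, dependsOn_blockSuccess L⟩

lemma mul_tau1_le_of_mem_blockSuccess {p r : ℝ} (hp : 1 / 2 ≤ p) (hr : 0 ≤ r) {L k : ℕ}
    (hL : Even L) {x : ℕ → Fin 3} (hx : x ∈ blockSuccess L k) :
    r ^ L * (tau1 L x : ℝ) ≤ 8 * ((L / 2 : ℕ) * p * r ^ L) * (k + 1) := by
  have hτ : tau1 L x ≤ 4 * (L / 2) * (k + 1) := by
    rw [show 4 * (L / 2) = 2 * L by obtain ⟨m, rfl⟩ := hL; omega]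
    exact tau1_le_of_mem_blockSuccess hx
  have hpos : 0 ≤ ((L / 2 : ℕ) : ℝ) * r ^ L * (k + 1) := by positivity
  calc r ^ L * (tau1 L x : ℝ) ≤ r ^ L * (4 * (L / 2) * (k + 1) : ℕ) := by gcongr
    _ ≤ 8 * ((L / 2 : ℕ) * p * r ^ L) * (k + 1) := by push_cast; nlinarith

section Geometric

open Real

lemma rpow_le_mul_exp_half {α x : ℝ} (hα : 0 < α) (hx : 0 ≤ x) :
    x ^ α ≤ (2 * α) ^ α * exp (x / 2) := by
  rcases hx.eq_or_lt with rfl | hx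
  · rw [zero_rpow hα.ne']
    positivity
  have hlog : log (x / (2 * α)) ≤ x / (2 * α) - 1 := log_le_sub_one_of_pos (by positivity)
  have hkey : α * log (x / (2 * α)) ≤ x / 2 :=
    calc α * log (x / (2 * α)) ≤ α * (x / (2 * α) - 1) := mul_le_mul_of_nonneg_left hlog hα.le
      _ = x / 2 - α := by field_simp
      _ ≤ x / 2 := by linarith
  rw [log_div hx.ne' (by positivity)] at hkey
  rw [rpow_def_of_pos hx, rpow_def_of_pos (by positivity), ← exp_add, exp_le_exp]
  linarith

lemma exp_half_mul_one_sub_le (ρ : ℝ) : exp (ρ / 2) * (1 - ρ) ≤ 1 - ρ / 2 := by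
  have hinv : exp (ρ / 2) * exp (-(ρ / 2)) = 1 := by rw [← exp_add]; simp
  nlinarith [exp_pos (ρ / 2), add_one_le_exp (-(ρ / 2)), add_one_le_exp (ρ / 2)]

lemma rpow_mul_one_sub_pow_le {α ρ : ℝ} (hα : 0 < α) (hρ0 : 0 ≤ ρ) (hρ1 : ρ ≤ 1) (k : ℕ) :
    (ρ * (k + 1)) ^ α * (1 - ρ) ^ k ≤ (2 * α) ^ α * exp (1 / 2) * (1 - ρ / 2) ^ k := by
  have hexp : exp (ρ * (k + 1) / 2) = exp (ρ / 2) * exp (ρ / 2) ^ k := by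
    rw [← exp_nat_mul, ← exp_add]; ring_nf
  calc (ρ * (k + 1)) ^ α * (1 - ρ) ^ k
      ≤ (2 * α) ^ α * exp (ρ * (k + 1) / 2) * (1 - ρ) ^ k :=
        mul_le_mul_of_nonneg_right (rpow_le_mul_exp_half hα (by positivity))
          (pow_nonneg (by linarith) k)
    _ = (2 * α) ^ α * exp (ρ / 2) * (exp (ρ / 2) * (1 - ρ)) ^ k := by rw [hexp, mul_pow]; ring
    _ ≤ (2 * α) ^ α * exp (1 / 2) * (1 - ρ / 2) ^ k := by
        have hbase : 0 ≤ exp (ρ / 2) * (1 - ρ) := mul_nonneg (exp_pos _).le (by linarith)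
        gcongr (2 * α) ^ α * exp ?_ * ?_ ^ k
        · linarith
        · exact exp_half_mul_one_sub_le ρ

lemma tsum_rpow_mul_geometric_le {α ρ C : ℝ} (hα : 0 < α) (hρ0 : 0 < ρ) (hρ1 : ρ ≤ 1)
    (hC : 0 ≤ C) :
    ∑' k : ℕ, ENNReal.ofReal ((C * ρ * (k + 1)) ^ α) *
        ((1 - ENNReal.ofReal ρ) ^ k * ENNReal.ofReal ρ) ≤
      ENNReal.ofReal (2 * C ^ α * (2 * α) ^ α * exp (1 / 2)) := by
  set K := C ^ α * (2 * α) ^ α * exp (1 / 2)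
  have hterm (k : ℕ) : ENNReal.ofReal ((C * ρ * (k + 1)) ^ α) *
      ((1 - ENNReal.ofReal ρ) ^ k * ENNReal.ofReal ρ) ≤
      ENNReal.ofReal (K * ρ) * ENNReal.ofReal (1 - ρ / 2) ^ k := by
    rw [← ENNReal.ofReal_one, ← ENNReal.ofReal_sub _ hρ0.le, ← ENNReal.ofReal_pow (by linarith),
      ← ENNReal.ofReal_pow (by linarith), ← ENNReal.ofReal_mul (by positivity),
      ← ENNReal.ofReal_mul (by positivity), ← ENNReal.ofReal_mul (by positivity)]
    refine ENNReal.ofReal_le_ofReal ?_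
    rw [mul_assoc C, mul_rpow hC (by positivity)]
    have hbound := rpow_mul_one_sub_pow_le hα hρ0.le hρ1 k
    calc C ^ α * (ρ * (k + 1)) ^ α * ((1 - ρ) ^ k * ρ)
        = C ^ α * ((ρ * (k + 1)) ^ α * (1 - ρ) ^ k) * ρ := by ring
      _ ≤ C ^ α * ((2 * α) ^ α * exp (1 / 2) * (1 - ρ / 2) ^ k) * ρ := by gcongr
      _ = K * ρ * (1 - ρ / 2) ^ k := by ring
  have hratio : 1 - ENNReal.ofReal (1 - ρ / 2) = ENNReal.ofReal (ρ / 2) := by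
    rw [← ENNReal.ofReal_one, ← ENNReal.ofReal_sub _ (by linarith)]
    ring_nf
  calc _ ≤ ∑' k : ℕ, ENNReal.ofReal (K * ρ) * ENNReal.ofReal (1 - ρ / 2) ^ k :=
        ENNReal.tsum_le_tsum hterm
    _ = ENNReal.ofReal (2 * K) * ENNReal.ofReal (ρ / 2) * (ENNReal.ofReal (ρ / 2))⁻¹ := by
        rw [ENNReal.tsum_mul_left, ENNReal.tsum_geometric, hratio,
          ← ENNReal.ofReal_mul (by positivity)]
        ring_nf
    _ = ENNReal.ofReal (2 * C ^ α * (2 * α) ^ α * exp (1 / 2)) := by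
        rw [mul_assoc, ENNReal.mul_inv_cancel (by simpa using hρ0) ENNReal.ofReal_ne_top,
          mul_one]
        congr 1
        ring

end Geometric

theorem moment_bound_regeneration_time_general
    (p : ℝ) (hp : 1 / 2 < p) (hp1 : p < 1)
    (r : ℝ) (hr : r = (1 - p) / 2)
    (w : Measure (Fin 3))
    (hw0 : w {0} = ENNReal.ofReal r) (hw1 : w {1} = ENNReal.ofReal r)
    (hw2 : w {2} = ENNReal.ofReal p)
    (W : Measure (ℕ → Fin 3)) (hWprob : IsProbabilityMeasure W)
    (hiid : iIndepFun (fun i (ε : ℕ → Fin 3) => ε i) W)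
    (hmarg : ∀ i : ℕ, W.map (fun ε => ε i) = w)
    (α : ℝ) (hα : 1 < α) :
    ∃ M : ℝ, ∀ L : ℕ, Even L → 0 < L →
      ∫⁻ ε, (ENNReal.ofReal (r ^ L * (tau1 L ε : ℝ))) ^ α ∂W ≤ ENNReal.ofReal M := by
  have hr0 : 0 < r := by rw [hr]; linarith
  have hα0 : 0 < α := by linarith
  refine ⟨2 * 8 ^ α * (2 * α) ^ α * Real.exp (1 / 2), fun L hL hL0 => ?_⟩
  set ρ : ℝ := (L / 2 : ℕ) * p * r ^ L
  have hρ0 : 0 < ρ := by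
    have : 0 < L / 2 := by obtain ⟨m, rfl⟩ := hL; omega
    positivity
  have hsucc (k : ℕ) : W (blockSuccess L k) = ENNReal.ofReal ρ := by
    rw [measure_blockSuccess hiid hmarg hw0 hw1 hw2, ENNReal.ofReal_mul (by positivity),
      ENNReal.ofReal_mul (by positivity), ENNReal.ofReal_natCast, ENNReal.ofReal_pow hr0.le,
      mul_assoc]
  have hρ1 : ρ ≤ 1 := ENNReal.ofReal_le_one.1 (hsucc 0 ▸ prob_le_one)
  have hblocks := blockDetermined_blockSuccess hiid L
  calc ∫⁻ ε, (ENNReal.ofReal (r ^ L * (tau1 L ε : ℝ))) ^ α ∂W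
      ≤ ∑' k : ℕ, ENNReal.ofReal ((8 * ρ * (k + 1)) ^ α) * W (disjointed (blockSuccess L) k) := by
        refine lintegral_le_tsum_mul_measure_disjointed hblocks.measurableSet
          (hblocks.ae_exists_mem hsucc (by simpa using hρ0)) fun k ε hε => ?_
        rw [← ENNReal.ofReal_rpow_of_nonneg (by positivity) (by positivity)]
        exact ENNReal.rpow_le_rpow (ENNReal.ofReal_le_ofReal <| mul_tau1_le_of_mem_blockSuccess
          hp.le hr0.le hL (disjointed_subset _ _ hε)) hα0.le
    _ = ∑' k : ℕ, ENNReal.ofReal ((8 * ρ * (k + 1)) ^ α) *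
          ((1 - ENNReal.ofReal ρ) ^ k * ENNReal.ofReal ρ) := by
        simp_rw [hblocks.measure_disjointed hsucc]
    _ ≤ _ := tsum_rpow_mul_geometric_le hα0 hρ0 hρ1 (by norm_num)

/-- for every real `α > 1` there is a finite constant `M(α)` bounding
`E_W[(r^L · τ₁^{(L)})^α]` uniformly over all (positive) even `L`. -/
theorem moment_bound_regeneration_time
    (p : ℝ) (hp : 1 / 2 < p) (hp1 : p < 1)
    (r : ℝ) (hr : r = (1 - p) / 2)
    (w : Measure (Fin 3)) (hwprob : IsProbabilityMeasure w)
    (hw0 : w {0} = ENNReal.ofReal r) (hw1 : w {1} = ENNReal.ofReal r)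
    (hw2 : w {2} = ENNReal.ofReal p)
    (W : Measure (ℕ → Fin 3)) (hWprob : IsProbabilityMeasure W)
    (hiid : iIndepFun (fun i (ε : ℕ → Fin 3) => ε i) W)
    (hmarg : ∀ i : ℕ, W.map (fun ε => ε i) = w)
    (α : ℝ) (hα : 1 < α) :
    ∃ M : ℝ, ∀ L : ℕ, Even L → 0 < L →
      ∫⁻ ε, (ENNReal.ofReal (r ^ L * (tau1 L ε : ℝ))) ^ α ∂W ≤ ENNReal.ofReal M :=
  moment_bound_regeneration_time_general p hp hp1 r hr w hw0 hw1 hw2 W hWprob hiid hmarg α hα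
end

section
/- There exists a > 0 such that the supremum over all even L ∈ ℕ of the exponential moment E_W[exp(a · r^L · τ_1^{(L)})] is finite. -/
/-!
Cut `ℕ` into blocks of length `2L` and call block `j` hit when, for some `s < L`, the positions
`2Lj + s, …, 2Lj + s + L` carry the symbol `0` (coded `2`) followed by the alternating word; a hit in
block `j` forces `τ₁ ≤ 2L(j + 1)`. The alternating word contains no `0`, so two such marked
occurrences less than `L` apart are incompatible: the `L` events making up a hit are disjoint, and a
block is hit with probability exactly `ρ = L p r^L`, with no second-moment estimate needed. Hits in
different blocks are independent, hence `P(τ₁ > 2Lk) ≤ (1 - ρ)^k`, and summing the layers of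
`exp (c τ₁)` against this geometric tail gives `E[exp (ρ τ₁ / 4L)] ≤ 2`, i.e. the bound with
`a = p / 4` and `M = 2`.
-/

open MeasureTheory ProbabilityTheory

open Finset ENNReal Function

section LayerCake

variable {Ω : Type*} [MeasurableSpace Ω] {μ : Measure Ω} [IsProbabilityMeasure μ]

lemma ENNReal.pow_le_one_add_mul_geom_sum {x : ℝ≥0∞} (hx : 1 ≤ x) (n : ℕ) :
    x ^ n ≤ 1 + (x - 1) * ∑ k ∈ range n, x ^ k := by
  have h := geom_sum_mul_add (x - 1) n
  rw [tsub_add_cancel_of_le hx] at h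
  rw [← h, add_comm, mul_comm]

lemma Real.exp_mul_one_sub_le_one (y : ℝ) : Real.exp y * (1 - y) ≤ 1 := by
  have h := mul_le_mul_of_nonneg_left (Real.one_sub_le_exp_neg y) (Real.exp_nonneg y)
  rwa [← Real.exp_add, add_neg_cancel, Real.exp_zero] at h

lemma lintegral_exp_le_of_tail_subset {N : Ω → ℕ} {m : ℕ} (hm : 0 < m) {c : ℝ} (hc : 0 ≤ c)
    {A : ℕ → Set Ω} (hA : ∀ k, MeasurableSet (A k)) (hNA : ∀ k, {ω | m * k < N ω} ⊆ A k) :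
    ∫⁻ ω, ENNReal.ofReal (Real.exp (c * N ω)) ∂μ
      ≤ 1 + (ENNReal.ofReal (Real.exp (c * m)) - 1)
          * ∑' k, ENNReal.ofReal (Real.exp (c * m)) ^ k * μ (A k) := by
  set x := ENNReal.ofReal (Real.exp (c * m))
  have hx : 1 ≤ x := ENNReal.one_le_ofReal.2 (Real.one_le_exp (by positivity))
  have hpoint : ∀ ω, ENNReal.ofReal (Real.exp (c * N ω))
      ≤ 1 + (x - 1) * ∑' k, (A k).indicator (fun _ ↦ x ^ k) ω := by
    intro ω
    have hcover : ∃ n, N ω ≤ m * n := ⟨N ω, Nat.le_mul_of_pos_left _ hm⟩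
    calc ENNReal.ofReal (Real.exp (c * N ω))
        ≤ x ^ Nat.find hcover := by
          rw [← ENNReal.ofReal_pow (Real.exp_nonneg _), ← Real.exp_nat_mul]
          have hN : (N ω : ℝ) ≤ m * Nat.find hcover := by exact_mod_cast Nat.find_spec hcover
          exact ENNReal.ofReal_le_ofReal (Real.exp_le_exp.2 (by nlinarith))
      _ ≤ 1 + (x - 1) * ∑ k ∈ range (Nat.find hcover), x ^ k :=
          ENNReal.pow_le_one_add_mul_geom_sum hx _
      _ = 1 + (x - 1) * ∑ k ∈ range (Nat.find hcover), (A k).indicator (fun _ ↦ x ^ k) ω := by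
          congr 2
          refine sum_congr rfl fun k hk ↦ (Set.indicator_of_mem (hNA k ?_) (fun _ ↦ x ^ k)).symm
          exact not_le.1 (Nat.find_min hcover (mem_range.1 hk))
      _ ≤ 1 + (x - 1) * ∑' k, (A k).indicator (fun _ ↦ x ^ k) ω := by
          gcongr
          exact ENNReal.sum_le_tsum _
  calc ∫⁻ ω, ENNReal.ofReal (Real.exp (c * N ω)) ∂μ
      ≤ ∫⁻ ω, 1 + (x - 1) * ∑' k, (A k).indicator (fun _ ↦ x ^ k) ω ∂μ := lintegral_mono hpoint
    _ = 1 + (x - 1) * ∑' k, x ^ k * μ (A k) := by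
        rw [lintegral_add_left measurable_const, lintegral_const, measure_univ, one_mul,
          lintegral_const_mul' (x - 1) _ (sub_ne_top ofReal_ne_top),
          lintegral_tsum fun k ↦ (measurable_const.indicator (hA k)).aemeasurable]
        simp_rw [lintegral_indicator_const (hA _)]

lemma lintegral_exp_le_two_of_tail_le {N : Ω → ℕ} {m : ℕ} (hm : 0 < m) {ρ : ℝ} (hρ0 : 0 ≤ ρ)
    (hρ1 : ρ ≤ 1) {A : ℕ → Set Ω} (hA : ∀ k, MeasurableSet (A k))
    (hNA : ∀ k, {ω | m * k < N ω} ⊆ A k) (htail : ∀ k, μ (A k) ≤ ENNReal.ofReal (1 - ρ) ^ k) :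
    ∫⁻ ω, ENNReal.ofReal (Real.exp (ρ / (2 * m) * N ω)) ∂μ ≤ 2 := by
  refine (lintegral_exp_le_of_tail_subset hm (by positivity) hA hNA).trans ?_
  have hcm : ρ / (2 * m) * m = ρ / 2 := by field_simp
  rw [hcm]
  set X := Real.exp (ρ / 2)
  have hX := Real.exp_nonneg (ρ / 2)
  have hgeom : ∑' k, ENNReal.ofReal X ^ k * μ (A k) ≤ (1 - ENNReal.ofReal (X * (1 - ρ)))⁻¹ := by
    rw [← ENNReal.tsum_geometric, ENNReal.ofReal_mul hX]
    refine ENNReal.tsum_le_tsum fun k ↦ ?_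
    rw [mul_pow]
    gcongr
    exact htail k
  have hratio : ENNReal.ofReal X - 1 ≤ 1 - ENNReal.ofReal (X * (1 - ρ)) := by
    rw [← ENNReal.ofReal_one, ← ENNReal.ofReal_sub _ zero_le_one,
      ← ENNReal.ofReal_sub _ (mul_nonneg hX (by linarith))]
    refine ENNReal.ofReal_le_ofReal ?_
    have := Real.exp_mul_one_sub_le_one (ρ / 2)
    linarith
  calc 1 + (ENNReal.ofReal X - 1) * ∑' k, ENNReal.ofReal X ^ k * μ (A k)
      ≤ 1 + (ENNReal.ofReal X - 1) * (1 - ENNReal.ofReal (X * (1 - ρ)))⁻¹ := by gcongr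
    _ ≤ 1 + 1 := by
        gcongr
        exact ENNReal.div_le_of_le_mul (by rwa [one_mul])
    _ = 2 := one_add_one_eq_two

end LayerCake

section Independence

variable {ι α : Type*}

lemma dependsOn_mem_compl {E : Set (ι → α)} {s : Set ι} (h : DependsOn (· ∈ E) s) :
    DependsOn (· ∈ Eᶜ) s :=
  fun _ _ hxy ↦ congrArg Not (h hxy)

lemma dependsOn_mem_iUnion {κ : Sort*} {E : κ → Set (ι → α)} {s : Set ι}
    (h : ∀ k, DependsOn (· ∈ E k) s) : DependsOn (· ∈ ⋃ k, E k) s :=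
  fun _ _ hxy ↦ by simp only [Set.mem_iUnion, h _ hxy]

lemma dependsOn_mem_iInter {κ : Sort*} {E : κ → Set (ι → α)} {s : Set ι}
    (h : ∀ k, DependsOn (· ∈ E k) s) : DependsOn (· ∈ ⋂ k, E k) s :=
  fun _ _ hxy ↦ by simp only [Set.mem_iInter, h _ hxy]

lemma restrict_preimage_image_of_dependsOn {E : Set (ι → α)} {s : Finset ι}
    (h : DependsOn (· ∈ E) s) : s.restrict ⁻¹' (s.restrict '' E) = E :=
  Set.Subset.antisymm
    (fun _ ⟨_, hy, hyx⟩ ↦ (h fun i hi ↦ congrFun hyx ⟨i, hi⟩).mp hy)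
    (Set.subset_preimage_image _ _)

variable [MeasurableSpace α] [Finite α] [MeasurableSingletonClass α] {μ : Measure (ι → α)}

lemma measure_inter_eq_mul_of_dependsOn_s1 (hμ : iIndepFun (fun i ε ↦ ε i) μ) {s t : Finset ι}
    (hst : Disjoint s t) {E F : Set (ι → α)} (hE : DependsOn (· ∈ E) s)
    (hF : DependsOn (· ∈ F) t) : μ (E ∩ F) = μ E * μ F := by
  rw [← restrict_preimage_image_of_dependsOn hE, ← restrict_preimage_image_of_dependsOn hF]
  exact (hμ.indepFun_finset s t hst measurable_pi_apply).measure_inter_preimage_eq_mul _ _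
    (Set.toFinite _).measurableSet (Set.toFinite _).measurableSet

lemma measure_biInter_range_eq_prod_of_dependsOn (hμ : iIndepFun (fun i ε ↦ ε i) μ)
    {s : ℕ → Finset ι} (hs : Pairwise (Disjoint on s)) {E : ℕ → Set (ι → α)}
    (hE : ∀ j, DependsOn (· ∈ E j) (s j)) (k : ℕ) :
    μ (⋂ j ∈ range k, E j) = ∏ j ∈ range k, μ (E j) := by
  induction k with
  | zero => simp [hμ.isProbabilityMeasure.measure_univ]
  | succ k ih =>
    classical
    have hdisj : Disjoint (s k) ((range k).biUnion s) :=
      (disjoint_biUnion_right _ _ _).2 fun j hj ↦ hs (mem_range.1 hj).ne'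
    have hdep : DependsOn (· ∈ ⋂ j ∈ range k, E j) ((range k).biUnion s) := by
      refine dependsOn_mem_iInter fun j ↦ dependsOn_mem_iInter fun hj ↦ (hE j).mono ?_
      exact coe_subset.2 (subset_biUnion_of_mem s hj)
    rw [range_add_one, set_biInter_insert, prod_insert notMem_range_self,
      measure_inter_eq_mul_of_dependsOn_s1 hμ hdisj (hE k) hdep, ih]

end Independence

lemma pairwise_disjoint_on_Ico_mul (n : ℕ) :
    Pairwise (Disjoint on fun j ↦ Ico (n * j) (n * (j + 1))) := by
  intro i j hij
  rw [onFun, ← disjoint_coe, coe_Ico, coe_Ico]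
  have hmono : Monotone (n * ·) := fun _ _ h ↦ Nat.mul_le_mul_left n h
  exact hmono.pairwise_disjoint_on_Ico_succ hij

section Occurrences

variable {α : Type*}

def OccursAt (u : ℕ → α) (n t : ℕ) : Set (ℕ → α) := {ε | ∀ j < n, ε (t + j) = u j}

variable {u : ℕ → α} {n t : ℕ}

lemma dependsOn_mem_occursAt : DependsOn (· ∈ OccursAt u n t) (Ico t (t + n) : Finset ℕ) :=
  fun x y hxy ↦ propext <| forall₂_congr fun j hj ↦ by
    rw [hxy (t + j) (by simp only [coe_Ico, Set.mem_Ico]; omega)]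

variable [MeasurableSpace α] [MeasurableSingletonClass α]

lemma measurableSet_occursAt : MeasurableSet (OccursAt u n t) := by
  simp only [OccursAt, Set.ofPred_forall]
  exact MeasurableSet.iInter fun j ↦ MeasurableSet.iInter fun _ ↦
    measurable_pi_apply _ (measurableSet_singleton _)

lemma measure_occursAt {μ : Measure (ℕ → α)} {ν : Measure α}
    (hμ : iIndepFun (fun i ε ↦ ε i) μ) (hν : ∀ i, μ.map (fun ε ↦ ε i) = ν) :
    μ (OccursAt u n t) = ∏ j ∈ range n, ν {u j} := by
  have hset : OccursAt u n t = ⋂ j ∈ range n, (fun ε ↦ ε (t + j)) ⁻¹' {u j} := by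
    ext ε; simp [OccursAt]
  rw [hset, (hμ.precomp (add_right_injective t)).meas_biInter fun j _ ↦
    ⟨{u j}, measurableSet_singleton _, rfl⟩]
  refine prod_congr rfl fun j _ ↦ ?_
  rw [← hν (t + j), Measure.map_apply (measurable_pi_apply _) (measurableSet_singleton _)]

end Occurrences

def markedPat (j : ℕ) : Fin 3 := if j = 0 then 2 else altPat (j - 1)

lemma altPat_ne_two (j : ℕ) : altPat j ≠ 2 := by
  unfold altPat; split <;> decide

lemma disjoint_occursAt_markedPat {L s t : ℕ} (hst : s < t) (hts : t ≤ s + L) :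
    Disjoint (OccursAt markedPat (L + 1) s) (OccursAt markedPat (L + 1) t) := by
  refine Set.disjoint_left.2 fun ε hs ht ↦ altPat_ne_two (t - s - 1) ?_
  have h₁ := hs (t - s) (by omega)
  have h₂ := ht 0 (by omega)
  rw [Nat.add_sub_cancel' hst.le] at h₁
  simp only [markedPat, add_zero] at h₂
  simpa [markedPat, (Nat.sub_pos_of_lt hst).ne', h₂] using h₁.symm

def blockHit (L j : ℕ) : Set (ℕ → Fin 3) :=
  ⋃ s ∈ range L, OccursAt markedPat (L + 1) (2 * L * j + s)

lemma measurableSet_blockHit (L j : ℕ) : MeasurableSet (blockHit L j) :=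
  (range L).measurableSet_biUnion fun _ _ ↦ measurableSet_occursAt

lemma dependsOn_mem_blockHit (L j : ℕ) :
    DependsOn (· ∈ blockHit L j) (Ico (2 * L * j) (2 * L * (j + 1)) : Finset ℕ) :=
  dependsOn_mem_iUnion fun s ↦ dependsOn_mem_iUnion fun hs ↦ dependsOn_mem_occursAt.mono <| by
    simp only [coe_Ico, Set.Ico_subset_Ico_iff (by omega : 2 * L * j + s < 2 * L * j + s + (L + 1))]
    rw [mem_range] at hs
    constructor <;> nlinarith

lemma measure_blockHit {μ : Measure (ℕ → Fin 3)} {ν : Measure (Fin 3)}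
    (hμ : iIndepFun (fun i ε ↦ ε i) μ) (hν : ∀ i, μ.map (fun ε ↦ ε i) = ν)
    (hν01 : ν {1} = ν {0}) (L j : ℕ) :
    μ (blockHit L j) = L * (ν {2} * ν {0} ^ L) := by
  have halt : ∀ k, ν {altPat k} = ν {0} := fun k ↦ by unfold altPat; split <;> simp [hν01]
  have hocc : ∀ t, μ (OccursAt markedPat (L + 1) t) = ν {2} * ν {0} ^ L := fun t ↦ by
    simp [measure_occursAt hμ hν, prod_range_succ', markedPat, halt, mul_comm]
  rw [blockHit, measure_biUnion_finset (fun s hs t ht hst ↦ ?_) fun _ _ ↦ measurableSet_occursAt]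
  · simp [hocc]
  · rw [coe_range, Set.mem_Iio] at hs ht
    rcases hst.lt_or_gt with h | h
    · exact disjoint_occursAt_markedPat (by omega) (by omega)
    · exact (disjoint_occursAt_markedPat (by omega) (by omega)).symm

lemma tau1_le_of_occursAt {L t : ℕ} {ε : ℕ → Fin 3} (ht : 0 < t)
    (hε : ε ∈ OccursAt altPat L t) : tau1 L ε ≤ t + L :=
  Nat.sInf_le ⟨by omega, fun j hj ↦ by simpa using hε j hj⟩

lemma tau1_le_of_mem_blockHit {L j : ℕ} {ε : ℕ → Fin 3} (hε : ε ∈ blockHit L j) :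
    tau1 L ε ≤ 2 * L * (j + 1) := by
  simp only [blockHit, Set.mem_iUnion, mem_range] at hε
  obtain ⟨s, hs, hocc⟩ := hε
  have hpat : ε ∈ OccursAt altPat L (2 * L * j + s + 1) := fun i (hi : i < L) ↦ by
    simpa [markedPat, add_assoc, add_comm 1 i] using hocc (i + 1) (by omega)
  have := tau1_le_of_occursAt (Nat.succ_pos _) hpat
  nlinarith

lemma setOf_lt_tau1_subset (L k : ℕ) :
    {ε | 2 * L * k < tau1 L ε} ⊆ ⋂ j ∈ range k, (blockHit L j)ᶜ := by
  intro ε (hε : 2 * L * k < tau1 L ε)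
  simp only [Set.mem_iInter, mem_range, Set.mem_compl_iff]
  intro j hj hhit
  have := (tau1_le_of_mem_blockHit hhit).trans (Nat.mul_le_mul_left (2 * L) hj)
  omega

theorem exp_moment_bound_regeneration_time_general
    (p : ℝ) (hp : 1 / 2 < p) (hp1 : p < 1)
    (r : ℝ) (hr : r = (1 - p) / 2)
    (w : Measure (Fin 3))
    (hw0 : w {0} = ENNReal.ofReal r) (hw1 : w {1} = ENNReal.ofReal r)
    (hw2 : w {2} = ENNReal.ofReal p)
    (W : Measure (ℕ → Fin 3)) (hWprob : IsProbabilityMeasure W)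
    (hiid : iIndepFun (fun i ε => ε i) W)
    (hmarg : ∀ i : ℕ, W.map (fun ε => ε i) = w) :
    ∃ a : ℝ, 0 < a ∧ ∃ M : ℝ, ∀ L : ℕ, Even L → 0 < L →
      ∫⁻ ε, ENNReal.ofReal (Real.exp (a * (r ^ L * (tau1 L ε : ℝ)))) ∂W ≤ ENNReal.ofReal M := by
  have hr0 : 0 ≤ r := by rw [hr]; linarith
  refine ⟨p / 4, by linarith, 2, fun L _ hL ↦ ?_⟩
  set ρ := L * (p * r ^ L)
  have hρ0 : 0 ≤ ρ := by positivity
  have hhit : ∀ j, W (blockHit L j) = ENNReal.ofReal ρ := fun j ↦ by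
    rw [measure_blockHit hiid hmarg (hw1.trans hw0.symm), hw2, hw0, ← ofReal_pow hr0,
      ← ofReal_mul (by linarith), ← ofReal_natCast, ← ofReal_mul (Nat.cast_nonneg _)]
  have hρ1 : ρ ≤ 1 := by
    have := prob_le_one (μ := W) (s := blockHit L 0)
    rwa [hhit, ENNReal.ofReal_le_one] at this
  have htail : ∀ k, W (⋂ j ∈ range k, (blockHit L j)ᶜ) ≤ ENNReal.ofReal (1 - ρ) ^ k := fun k ↦ by
    rw [measure_biInter_range_eq_prod_of_dependsOn hiid (pairwise_disjoint_on_Ico_mul (2 * L))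
      fun j ↦ dependsOn_mem_compl (dependsOn_mem_blockHit L j)]
    simp [measure_compl (measurableSet_blockHit L _) (measure_ne_top _ _), hhit,
      ENNReal.ofReal_sub _ hρ0]
  have hbound := lintegral_exp_le_two_of_tail_le (μ := W) (m := 2 * L) (by omega) hρ0 hρ1
    (fun k ↦ (finite_toSet _).measurableSet_biInter fun j _ ↦ (measurableSet_blockHit L j).compl)
    (setOf_lt_tau1_subset L) htail
  have hexp : ∀ ε, p / 4 * (r ^ L * tau1 L ε) = ρ / (2 * ↑(2 * L)) * tau1 L ε := by
    intro ε; field_simp; push_cast; ring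
  simpa [hexp] using hbound

/-- there exists `a > 0` such that the exponential moments
`E_W[exp(a · r^L · τ₁^{(L)})]` are bounded uniformly over all (positive) even `L`. -/
theorem exp_moment_bound_regeneration_time
    (p : ℝ) (hp : 1 / 2 < p) (hp1 : p < 1)
    (r : ℝ) (hr : r = (1 - p) / 2)
    (w : Measure (Fin 3)) (hwprob : IsProbabilityMeasure w)
    (hw0 : w {0} = ENNReal.ofReal r) (hw1 : w {1} = ENNReal.ofReal r)
    (hw2 : w {2} = ENNReal.ofReal p)
    (W : Measure (ℕ → Fin 3)) (hWprob : IsProbabilityMeasure W)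
    (hiid : iIndepFun (fun i ε => ε i) W)
    (hmarg : ∀ i : ℕ, W.map (fun ε => ε i) = w) :
    ∃ a : ℝ, 0 < a ∧ ∃ M : ℝ, ∀ L : ℕ, Even L → 0 < L →
      ∫⁻ ε, ENNReal.ofReal (Real.exp (a * (r ^ L * (tau1 L ε : ℝ)))) ∂W ≤ ENNReal.ofReal M :=
  exp_moment_bound_regeneration_time_general p hp hp1 r hr w hw0 hw1 hw2 W hWprob hiid hmarg
end

section
/- For every even L ∈ ℕ and every a > 0 such that e^{a r^L L}(1 − r^L) < 1, one has E_W[exp(a · r^L · τ_1^{(L)})] ≤ r^L · e^{2 a r^L L} / (1 − e^{a r^L L}(1 − r^L)). -/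
/-!
Cut `ε` into consecutive blocks of length `L`. The events "block `k` spells the alternating
word" are independent, each of probability `r ^ L`. If block `n + 1` is the first of the blocks
`1, 2, …` to do so (block `0` cannot end the window, as `τ₁ > L`), then `τ₁ ≤ (n + 2) L`, and
this happens with probability `r ^ L (1 - r ^ L) ^ n`. Summing `e^{a r^L (n + 2) L}` against
this geometric law gives the bound.
-/

open MeasureTheory ProbabilityTheory

open scoped ENNReal

namespace ProbabilityTheory

section FirstSuccess

variable {Ω : Type*}

def firstSuccess (B : ℕ → Set Ω) (n : ℕ) : Set Ω := {ω | ω ∈ B n ∧ ∀ i < n, ω ∉ B i}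

lemma firstSuccess_eq_biInter (B : ℕ → Set Ω) (n : ℕ) :
    firstSuccess B n = ⋂ i ∈ Finset.range (n + 1), if i = n then B i else (B i)ᶜ := by
  ext ω
  simp only [firstSuccess, Set.mem_ofPred_eq, Set.mem_iInter, Finset.mem_range]
  constructor
  · rintro ⟨hn, hlt⟩ i hi
    split_ifs with h
    · exact h ▸ hn
    · exact hlt i (by omega)
  · intro h
    refine ⟨by simpa using h n (by omega), fun i hi => by simpa [hi.ne] using h i (by omega)⟩

lemma pairwise_disjoint_firstSuccess (B : ℕ → Set Ω) :
    Pairwise (Function.onFun Disjoint (firstSuccess B)) :=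
  (pairwise_disjoint_on _).2 fun n _ hnm =>
    Set.disjoint_left.2 fun _ hn hm => hm.2 n hnm hn.1

variable [MeasurableSpace Ω] {μ : Measure Ω} {B : ℕ → Set Ω} {ρ : ℝ≥0∞}

lemma measurableSet_firstSuccess (hB : ∀ i, MeasurableSet (B i)) (n : ℕ) :
    MeasurableSet (firstSuccess B n) := by
  rw [firstSuccess_eq_biInter]
  refine Finset.measurableSet_biInter _ fun i _ => ?_
  split_ifs
  exacts [hB i, (hB i).compl]

lemma iIndepSet.measure_firstSuccess (h : iIndepSet B μ) (hB : ∀ i, MeasurableSet (B i))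
    (hρ : ∀ i, μ (B i) = ρ) (n : ℕ) : μ (firstSuccess B n) = ρ * (1 - ρ) ^ n := by
  have := h.isProbabilityMeasure
  have hmeas : ∀ i ∈ Finset.range (n + 1),
      MeasurableSet[MeasurableSpace.generateFrom {B i}] (if i = n then B i else (B i)ᶜ) := by
    intro i _
    have hBi := MeasurableSpace.measurableSet_generateFrom (Set.mem_singleton (B i))
    split_ifs
    exacts [hBi, hBi.compl]
  rw [firstSuccess_eq_biInter, (iIndepSet_iff _ _).1 h _ hmeas, Finset.prod_range_succ,
    if_pos rfl, hρ, mul_comm]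
  have hfail : ∀ i ∈ Finset.range n, μ (if i = n then B i else (B i)ᶜ) = 1 - ρ := fun i hi => by
    rw [if_neg (Finset.mem_range.1 hi).ne, prob_compl_eq_one_sub (hB i), hρ]
  rw [Finset.prod_congr rfl hfail, Finset.prod_const, Finset.card_range]

lemma iIndepSet.measure_iUnion_firstSuccess (h : iIndepSet B μ) (hB : ∀ i, MeasurableSet (B i))
    (hρ : ∀ i, μ (B i) = ρ) (hρ0 : ρ ≠ 0) : μ (⋃ n, firstSuccess B n) = 1 := by
  have := h.isProbabilityMeasure
  have hρ1 : ρ ≤ 1 := hρ 0 ▸ prob_le_one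
  rw [measure_iUnion (pairwise_disjoint_firstSuccess B) (measurableSet_firstSuccess hB)]
  simp_rw [h.measure_firstSuccess hB hρ]
  rw [ENNReal.tsum_mul_left, ENNReal.tsum_geometric, ENNReal.sub_sub_cancel ENNReal.one_ne_top hρ1,
    ENNReal.mul_inv_cancel hρ0 (ne_top_of_le_ne_top ENNReal.one_ne_top hρ1)]

lemma iIndepSet.lintegral_le_tsum_of_le_on_firstSuccess (h : iIndepSet B μ)
    (hB : ∀ i, MeasurableSet (B i)) (hρ : ∀ i, μ (B i) = ρ) (hρ0 : ρ ≠ 0)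
    {f : Ω → ℝ≥0∞} {c : ℕ → ℝ≥0∞} (hf : ∀ n, ∀ ω ∈ firstSuccess B n, f ω ≤ c n) :
    ∫⁻ ω, f ω ∂μ ≤ ∑' n, c n * (ρ * (1 - ρ) ^ n) := by
  have := h.isProbabilityMeasure
  have hmeas := measurableSet_firstSuccess hB
  have hae : ∀ᵐ ω ∂μ, ω ∈ ⋃ n, firstSuccess B n := by
    rw [ae_mem_iff_measure_eq (MeasurableSet.iUnion hmeas).nullMeasurableSet, measure_univ,
      h.measure_iUnion_firstSuccess hB hρ hρ0]
  calc ∫⁻ ω, f ω ∂μ = ∫⁻ ω in ⋃ n, firstSuccess B n, f ω ∂μ := by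
        rw [Measure.restrict_eq_self_of_ae_mem hae]
    _ = ∑' n, ∫⁻ ω in firstSuccess B n, f ω ∂μ :=
        lintegral_iUnion hmeas (pairwise_disjoint_firstSuccess B) f
    _ ≤ ∑' n, ∫⁻ _ in firstSuccess B n, c n ∂μ :=
        ENNReal.tsum_le_tsum fun n => setLIntegral_mono' (hmeas n) (hf n)
    _ = ∑' n, c n * (ρ * (1 - ρ) ^ n) := by
        simp_rw [setLIntegral_const, h.measure_firstSuccess hB hρ]

end FirstSuccess

section Blocks

variable {Ω α : Type*} [MeasurableSpace Ω] [MeasurableSpace α] {μ : Measure Ω}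
  {X : ℕ → Ω → α}

def blockEvent (X : ℕ → Ω → α) (pat : ℕ → α) (L k : ℕ) : Set Ω :=
  ⋂ j : Fin L, X (k * L + j) ⁻¹' {pat j}

lemma measurableSet_blockEvent [MeasurableSingletonClass α] (hX : ∀ i, Measurable (X i))
    (pat : ℕ → α) (L k : ℕ) : MeasurableSet (blockEvent X pat L k) :=
  MeasurableSet.iInter fun _ => hX _ (measurableSet_singleton _)

lemma injective_mul_add_fin (L : ℕ) :
    Function.Injective fun kj : ℕ × Fin L => kj.1 * L + kj.2 := by
  rcases L.eq_zero_or_pos with rfl | hL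
  · exact fun kj => kj.2.elim0
  · have : NeZero L := ⟨hL.ne'⟩
    exact (Nat.divModEquiv L).symm.injective

lemma iIndepFun.measure_biInter_blockEvent [MeasurableSingletonClass α] (h : iIndepFun X μ)
    (pat : ℕ → α) (L : ℕ) (s : Finset ℕ) :
    μ (⋂ k ∈ s, blockEvent X pat L k) = ∏ k ∈ s, ∏ j : Fin L, μ (X (k * L + j) ⁻¹' {pat j}) := by
  have hset : ⋂ k ∈ s, blockEvent X pat L k
      = ⋂ kj ∈ s ×ˢ (Finset.univ : Finset (Fin L)), X (kj.1 * L + kj.2) ⁻¹' {pat kj.2} := by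
    ext ω
    simp only [blockEvent, Set.mem_iInter, Finset.mem_product, Finset.mem_univ, and_true,
      Prod.forall]
    exact forall_congr' fun k => ⟨fun h j hk => h hk j, fun h hk j => h j hk⟩
  rw [hset, (h.precomp (injective_mul_add_fin L)).meas_biInter
    fun kj _ => ⟨{pat kj.2}, measurableSet_singleton _, rfl⟩, Finset.prod_product]

lemma iIndepFun.iIndepSet_blockEvent [MeasurableSingletonClass α] (h : iIndepFun X μ)
    (hX : ∀ i, Measurable (X i)) (pat : ℕ → α) (L : ℕ) :
    iIndepSet (blockEvent X pat L) μ := by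
  refine (iIndepSet_iff_meas_biInter (measurableSet_blockEvent hX pat L)).2 fun s => ?_
  rw [h.measure_biInter_blockEvent]
  refine Finset.prod_congr rfl fun k _ => ?_
  simpa using (h.measure_biInter_blockEvent pat L {k}).symm

end Blocks

end ProbabilityTheory

lemma tau1_le_of_mem_blockEvent {L k : ℕ} {ε : ℕ → Fin 3} (hL : 0 < L) (hk : 0 < k)
    (h : ε ∈ blockEvent (fun i ε => ε i) altPat L k) : tau1 L ε ≤ (k + 1) * L := by
  refine Nat.sInf_le ⟨lt_mul_of_one_lt_left hL (by omega), fun j hj => ?_⟩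
  have hsub : (k + 1) * L - L = k * L := by rw [add_mul, one_mul, Nat.add_sub_cancel]
  rw [hsub]
  exact Set.mem_iInter.1 h ⟨j, hj⟩

lemma tsum_ofReal_exp_mul_geometric {t ρ : ℝ} (hρ0 : 0 ≤ ρ) (hρ1 : ρ ≤ 1)
    (h : Real.exp t * (1 - ρ) < 1) :
    ∑' n : ℕ, ENNReal.ofReal (Real.exp (t * (n + 2))) * (ENNReal.ofReal ρ * (1 - ENNReal.ofReal ρ) ^ n)
      = ENNReal.ofReal (ρ * Real.exp (2 * t) / (1 - Real.exp t * (1 - ρ))) := by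
  have hx0 : 0 ≤ Real.exp t * (1 - ρ) := mul_nonneg (Real.exp_nonneg t) (by linarith)
  have hterm : ∀ n : ℕ,
      ENNReal.ofReal (Real.exp (t * (n + 2))) * (ENNReal.ofReal ρ * (1 - ENNReal.ofReal ρ) ^ n)
        = ENNReal.ofReal (ρ * Real.exp (2 * t)) * ENNReal.ofReal (Real.exp t * (1 - ρ)) ^ n := by
    intro n
    rw [← ENNReal.ofReal_one, ← ENNReal.ofReal_sub _ hρ0, ← ENNReal.ofReal_pow (by linarith),
      ← ENNReal.ofReal_pow hx0, ← ENNReal.ofReal_mul hρ0, ← ENNReal.ofReal_mul (by positivity),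
      ← ENNReal.ofReal_mul (by positivity), mul_pow, ← Real.exp_nat_mul]
    congr 1
    rw [show t * (n + 2) = n * t + 2 * t by ring, Real.exp_add]
    ring
  rw [tsum_congr hterm, ENNReal.tsum_mul_left, ENNReal.tsum_geometric, ← ENNReal.ofReal_one,
    ← ENNReal.ofReal_sub _ hx0, ← ENNReal.ofReal_inv_of_pos (by linarith),
    ← ENNReal.ofReal_mul (by positivity), div_eq_mul_inv]

theorem exp_moment_geometric_bound_general
    (p : ℝ) (hp : 1 / 2 < p) (hp1 : p < 1)
    (r : ℝ) (hr : r = (1 - p) / 2)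
    (w : Measure (Fin 3))
    (hw0 : w {0} = ENNReal.ofReal r) (hw1 : w {1} = ENNReal.ofReal r)
    (W : Measure (ℕ → Fin 3))
    (hiid : iIndepFun (fun (i : ℕ) (ε : ℕ → Fin 3) => ε i) W)
    (hmarg : ∀ i : ℕ, W.map (fun ε => ε i) = w)
    (L : ℕ) (hL0 : 0 < L)
    (a : ℝ) (ha : 0 < a)
    (hcond : Real.exp (a * r ^ L * L) * (1 - r ^ L) < 1) :
    ∫⁻ ε, ENNReal.ofReal (Real.exp (a * (r ^ L * (tau1 L ε : ℝ)))) ∂W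
      ≤ ENNReal.ofReal
          (r ^ L * Real.exp (2 * a * r ^ L * L)
            / (1 - Real.exp (a * r ^ L * L) * (1 - r ^ L))) := by
  have hr0 : 0 < r := by rw [hr]; linarith
  have hr1 : r < 1 := by rw [hr]; linarith
  set B := blockEvent (fun i (ε : ℕ → Fin 3) => ε i) altPat L ∘ Nat.succ
  have hB_meas (n : ℕ) : MeasurableSet (B n) := measurableSet_blockEvent measurable_pi_apply _ _ _
  have hB_indep : iIndepSet B W :=
    (hiid.iIndepSet_blockEvent measurable_pi_apply altPat L).precomp Nat.succ_injective
  have hB_prob (n : ℕ) : W (B n) = ENNReal.ofReal (r ^ L) := by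
    have hletter (j : ℕ) : w {altPat j} = ENNReal.ofReal r := by
      unfold altPat; split_ifs; exacts [hw0, hw1]
    have hcoord (i : ℕ) (x : Fin 3) : W ((fun ε : ℕ → Fin 3 => ε i) ⁻¹' {x}) = w {x} := by
      rw [← hmarg i, Measure.map_apply (measurable_pi_apply i) (measurableSet_singleton x)]
    have hblock := hiid.measure_biInter_blockEvent altPat L {n + 1}
    simp only [Finset.set_biInter_singleton, hcoord, hletter, Finset.prod_const,
      Finset.card_univ, Fintype.card_fin, Finset.card_singleton, pow_one] at hblock
    rw [ENNReal.ofReal_pow hr0.le]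
    exact hblock
  calc _ ≤ ∑' n : ℕ, ENNReal.ofReal (Real.exp (a * r ^ L * L * (n + 2)))
          * (ENNReal.ofReal (r ^ L) * (1 - ENNReal.ofReal (r ^ L)) ^ n) := by
        refine hB_indep.lintegral_le_tsum_of_le_on_firstSuccess hB_meas hB_prob
          (by positivity) fun n ε hε => ENNReal.ofReal_le_ofReal (Real.exp_le_exp.2 ?_)
        have hτ : (tau1 L ε : ℝ) ≤ (n + 2) * L := by
          exact_mod_cast tau1_le_of_mem_blockEvent hL0 n.succ_pos hε.1
        calc a * (r ^ L * tau1 L ε) ≤ a * (r ^ L * ((n + 2) * L)) := by gcongr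
          _ = a * r ^ L * L * (n + 2) := by ring
    _ = _ := by
        rw [tsum_ofReal_exp_mul_geometric (by positivity) (pow_le_one₀ hr0.le hr1.le) hcond]
        ring_nf

/-- the explicit geometric-sum bound on the exponential moment of `τ₁^{(L)}`. -/
theorem exp_moment_geometric_bound
    (p : ℝ) (hp : 1 / 2 < p) (hp1 : p < 1)
    (r : ℝ) (hr : r = (1 - p) / 2)
    (w : Measure (Fin 3)) (hwprob : IsProbabilityMeasure w)
    (hw0 : w {0} = ENNReal.ofReal r) (hw1 : w {1} = ENNReal.ofReal r)
    (hw2 : w {2} = ENNReal.ofReal p)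
    (W : Measure (ℕ → Fin 3)) (hWprob : IsProbabilityMeasure W)
    (hiid : iIndepFun (fun (i : ℕ) (ε : ℕ → Fin 3) => ε i) W)
    (hmarg : ∀ i : ℕ, W.map (fun ε => ε i) = w)
    (L : ℕ) (hL : Even L) (hL0 : 0 < L)
    (a : ℝ) (ha : 0 < a)
    (hcond : Real.exp (a * r ^ L * L) * (1 - r ^ L) < 1) :
    ∫⁻ ε, ENNReal.ofReal (Real.exp (a * (r ^ L * (tau1 L ε : ℝ)))) ∂W
      ≤ ENNReal.ofReal
          (r ^ L * Real.exp (2 * a * r ^ L * L)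
            / (1 - Real.exp (a * r ^ L * L) * (1 - r ^ L))) :=
  exp_moment_geometric_bound_general p hp hp1 r hr w hw0 hw1 W hiid hmarg L hL0 a ha hcond
end

section
/- For every c > 0, the liminf as L → ∞ (L ranging over the even natural numbers) of r^L · E_W[τ_1^{(L)}] is at least c · e^{−c/r}; in particular this liminf is strictly positive. -/
/-!
Fix `L > 0` and let `t = r ^ L` be the probability that the alternating word fills a given window.
The windows ending at `2L, 3L, …` are disjoint, hence independent, so by the second
Borel–Cantelli lemma the word occurs almost surely; `τ₁ ≥ N` then holds as soon as no window ending
at some `L < n < N` carries it, which by a union bound has probability at least `1 - (N - L - 1) t`.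
Taking `N - L - 1 = ⌊1 / (2t)⌋` gives `t · E τ₁ ≥ 1/4` for every `L`, while `c e^{-c/r} ≤ r < 1/4`
because `x ≤ e^x`.
-/

open MeasureTheory ProbabilityTheory
open scoped ENNReal

open Filter

lemma measure_setOf_forall_mem_coord_eq {ι α : Type*} [MeasurableSpace α]
    [MeasurableSingletonClass α] {W : Measure (ι → α)} {w : Measure α}
    (hiid : iIndepFun (fun i (ε : ι → α) ↦ ε i) W) (hmarg : ∀ i, W.map (fun ε ↦ ε i) = w)
    (s : Finset ι) (a : ι → α) :
    W {ε | ∀ i ∈ s, ε i = a i} = ∏ i ∈ s, w {a i} := by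
  have hset : {ε : ι → α | ∀ i ∈ s, ε i = a i} = ⋂ i ∈ s, (fun ε ↦ ε i) ⁻¹' {a i} := by
    ext ε; simp
  rw [hset, hiid.measure_inter_preimage_eq_mul s fun i _ ↦ measurableSet_singleton (a i)]
  refine Finset.prod_congr rfl fun i _ ↦ ?_
  rw [← hmarg i, Measure.map_apply (measurable_pi_apply i) (measurableSet_singleton _)]

lemma measure_singleton_altPat {w : Measure (Fin 3)} {r : ℝ} (hw0 : w {0} = ENNReal.ofReal r)
    (hw1 : w {1} = ENNReal.ofReal r) (j : ℕ) : w {altPat j} = ENNReal.ofReal r := by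
  unfold altPat; split_ifs <;> assumption

/-- Chosen so that `tau1 L ε = sInf {n | L < n ∧ ε ∈ altWordEndsAt L n}` holds definitionally. -/
def altWordEndsAt (L n : ℕ) : Set (ℕ → Fin 3) := {ε | ∀ j < L, ε (n - L + j) = altPat j}

lemma altWordEndsAt_eq_setOf_forall_mem {L n : ℕ} (hLn : L ≤ n) {a : ℕ → Fin 3}
    (ha : ∀ j < L, a (n - L + j) = altPat j) :
    altWordEndsAt L n = {ε | ∀ i ∈ Finset.Ico (n - L) n, ε i = a i} := by
  ext ε
  simp only [altWordEndsAt, Set.mem_ofPred_eq, Finset.mem_Ico]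
  constructor
  · rintro h i ⟨hi₁, hi₂⟩
    obtain ⟨j, rfl⟩ := Nat.exists_eq_add_of_le hi₁
    rw [h j (by omega), ha j (by omega)]
  · intro h j hj
    rw [h _ ⟨by omega, by omega⟩, ha j hj]

lemma measurableSet_altWordEndsAt (L n : ℕ) : MeasurableSet (altWordEndsAt L n) := by
  unfold altWordEndsAt; measurability

lemma measure_altWordEndsAt {w : Measure (Fin 3)} {W : Measure (ℕ → Fin 3)} {r : ℝ}
    (hiid : iIndepFun (fun i (ε : ℕ → Fin 3) ↦ ε i) W) (hmarg : ∀ i, W.map (fun ε ↦ ε i) = w)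
    (hw0 : w {0} = ENNReal.ofReal r) (hw1 : w {1} = ENNReal.ofReal r) {L n : ℕ} (hLn : L ≤ n) :
    W (altWordEndsAt L n) = ENNReal.ofReal r ^ L := by
  rw [altWordEndsAt_eq_setOf_forall_mem hLn (a := fun i ↦ altPat (i - (n - L))) (by simp),
    measure_setOf_forall_mem_coord_eq hiid hmarg, Finset.prod_congr rfl fun i _ ↦
      measure_singleton_altPat hw0 hw1 _, Finset.prod_const, Nat.card_Ico, Nat.sub_sub_self hLn]

lemma le_tau1 {L N : ℕ} {ε : ℕ → Fin 3} (hex : ∃ n, L < n ∧ ε ∈ altWordEndsAt L n)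
    (hnone : ∀ n, L < n → n < N → ε ∉ altWordEndsAt L n) : N ≤ tau1 L ε :=
  le_csInf hex fun n hn ↦ not_lt.1 fun h ↦ hnone n hn.1 h hn.2

section RegenerationTime

variable {w : Measure (Fin 3)} {W : Measure (ℕ → Fin 3)} {r : ℝ} {L : ℕ}

lemma iIndepSet_altWordEndsAt_succ_succ_mul (hiid : iIndepFun (fun i (ε : ℕ → Fin 3) ↦ ε i) W)
    (hmarg : ∀ i, W.map (fun ε ↦ ε i) = w) (hL : 0 < L) :
    iIndepSet (fun k ↦ altWordEndsAt L ((k + 2) * L)) W := by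
  classical
  set block : ℕ → Finset ℕ := fun k ↦ Finset.Ico ((k + 2) * L - L) ((k + 2) * L)
  have hblock : ∀ k, (k + 2) * L - L = (k + 1) * L := fun k ↦ by
    rw [add_mul, add_mul]; omega
  -- all blocks read the same word `i ↦ altPat (i % L)`, so their intersection is again a cylinder
  have hA : ∀ k, altWordEndsAt L ((k + 2) * L) = {ε | ∀ i ∈ block k, ε i = altPat (i % L)} :=
    fun k ↦ altWordEndsAt_eq_setOf_forall_mem (by nlinarith) fun j hj ↦ by
      rw [hblock, add_comm, Nat.add_mul_mod_self_right, Nat.mod_eq_of_lt hj]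
  have hdiv : ∀ k, ∀ i ∈ block k, i / L = k + 1 := fun k i hi ↦ by
    rw [Finset.mem_Ico, hblock] at hi
    exact Nat.div_eq_of_lt_le hi.1 (by rw [add_mul, add_mul] at hi ⊢; omega)
  have hdisj (S : Finset ℕ) : (S : Set ℕ).PairwiseDisjoint block := fun k _ k' _ hkk' ↦
    Finset.disjoint_left.2 fun i hi hi' ↦
      hkk' (by have := hdiv k i hi; have := hdiv k' i hi'; omega)
  rw [iIndepSet_iff_meas_biInter fun k ↦ measurableSet_altWordEndsAt _ _]
  intro S
  have hinter : ⋂ k ∈ S, altWordEndsAt L ((k + 2) * L)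
      = {ε | ∀ i ∈ S.biUnion block, ε i = altPat (i % L)} := by
    ext ε; simp only [hA, Finset.mem_biUnion]; aesop
  rw [hinter, measure_setOf_forall_mem_coord_eq hiid hmarg, Finset.prod_biUnion (hdisj S)]
  simp only [hA, measure_setOf_forall_mem_coord_eq hiid hmarg]

lemma ae_exists_altWordEndsAt (hiid : iIndepFun (fun i (ε : ℕ → Fin 3) ↦ ε i) W)
    (hmarg : ∀ i, W.map (fun ε ↦ ε i) = w) (hw0 : w {0} = ENNReal.ofReal r)
    (hw1 : w {1} = ENNReal.ofReal r) (hr : 0 < r) (hL : 0 < L) :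
    ∀ᵐ ε ∂W, ∃ n, L < n ∧ ε ∈ altWordEndsAt L n := by
  have := hiid.isProbabilityMeasure
  have hmeas (k : ℕ) := measurableSet_altWordEndsAt L ((k + 2) * L)
  have hlimsup : W (limsup (fun k ↦ altWordEndsAt L ((k + 2) * L)) atTop) = 1 := by
    refine measure_limsup_eq_one hmeas (iIndepSet_altWordEndsAt_succ_succ_mul hiid hmarg hL) ?_
    have hword (k : ℕ) : W (altWordEndsAt L ((k + 2) * L)) = ENNReal.ofReal r ^ L :=
      measure_altWordEndsAt hiid hmarg hw0 hw1 (by nlinarith)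
    simp_rw [hword]
    exact ENNReal.tsum_const_eq_top_of_ne_zero (by positivity)
  have hae := (ae_mem_iff_measure_eq (MeasurableSet.measurableSet_limsup hmeas).nullMeasurableSet).2
    (hlimsup.trans measure_univ.symm)
  filter_upwards [hae] with ε hε
  obtain ⟨k, hk⟩ := (mem_limsup_iff_frequently_mem.1 hε).exists
  exact ⟨(k + 2) * L, by nlinarith, hk⟩

lemma natCast_mul_le_lintegral_tau1 (hiid : iIndepFun (fun i (ε : ℕ → Fin 3) ↦ ε i) W)
    (hmarg : ∀ i, W.map (fun ε ↦ ε i) = w) (hw0 : w {0} = ENNReal.ofReal r)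
    (hw1 : w {1} = ENNReal.ofReal r) (hr : 0 < r) (hL : 0 < L) (k : ℕ) :
    ((L + k + 1 : ℕ) : ℝ≥0∞) * (1 - k * ENNReal.ofReal r ^ L) ≤ ∫⁻ ε, (tau1 L ε : ℝ≥0∞) ∂W := by
  have := hiid.isProbabilityMeasure
  set S := ⋃ n ∈ Finset.Ioo L (L + k + 1), altWordEndsAt L n
  have hS : MeasurableSet S :=
    Finset.measurableSet_biUnion _ fun n _ ↦ measurableSet_altWordEndsAt L n
  have hWS : W S ≤ k * ENNReal.ofReal r ^ L := by
    refine (measure_biUnion_finset_le _ _).trans_eq ?_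
    rw [Finset.sum_congr rfl fun n hn ↦ measure_altWordEndsAt hiid hmarg hw0 hw1
      (Finset.mem_Ioo.1 hn).1.le, Finset.sum_const, Nat.card_Ioo, nsmul_eq_mul]
    congr; omega
  have hτ : ∀ᵐ ε ∂W, Sᶜ.indicator (fun _ ↦ ((L + k + 1 : ℕ) : ℝ≥0∞)) ε ≤ tau1 L ε := by
    filter_upwards [ae_exists_altWordEndsAt hiid hmarg hw0 hw1 hr hL] with ε hex
    refine Set.indicator_apply_le' (fun hεS ↦ ?_) fun _ ↦ zero_le
    exact_mod_cast le_tau1 hex fun n hn₁ hn₂ hn ↦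
      hεS (Set.mem_biUnion (Finset.mem_Ioo.2 ⟨hn₁, hn₂⟩) hn)
  calc ((L + k + 1 : ℕ) : ℝ≥0∞) * (1 - k * ENNReal.ofReal r ^ L)
      ≤ ((L + k + 1 : ℕ) : ℝ≥0∞) * W Sᶜ := by
        rw [prob_compl_eq_one_sub hS]; gcongr
    _ = ∫⁻ ε, Sᶜ.indicator (fun _ ↦ ((L + k + 1 : ℕ) : ℝ≥0∞)) ε ∂W :=
        (lintegral_indicator_const hS.compl _).symm
    _ ≤ ∫⁻ ε, (tau1 L ε : ℝ≥0∞) ∂W := lintegral_mono_ae hτ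

lemma ofReal_quarter_le_pow_mul_lintegral_tau1 (hiid : iIndepFun (fun i (ε : ℕ → Fin 3) ↦ ε i) W)
    (hmarg : ∀ i, W.map (fun ε ↦ ε i) = w) (hw0 : w {0} = ENNReal.ofReal r)
    (hw1 : w {1} = ENNReal.ofReal r) (hr : 0 < r) (hL : 0 < L) :
    ENNReal.ofReal (1 / 4) ≤ ENNReal.ofReal (r ^ L) * ∫⁻ ε, (tau1 L ε : ℝ≥0∞) ∂W := by
  set t := r ^ L with ht_def
  have ht : 0 < t := pow_pos hr L
  set k := ⌊(2 * t)⁻¹⌋₊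
  have hk₁ : k * t ≤ 1 / 2 :=
    calc k * t ≤ (2 * t)⁻¹ * t := by gcongr; exact Nat.floor_le (by positivity)
      _ = 1 / 2 := by field_simp
  have hk₂ : 1 / 2 < (k + 1) * t :=
    calc 1 / 2 = (2 * t)⁻¹ * t := by field_simp
      _ < (k + 1) * t := by gcongr; exact Nat.lt_floor_add_one _
  have hcast : ENNReal.ofReal (t * ((L + k + 1 : ℕ) * (1 - k * t)))
      = ENNReal.ofReal t * (((L + k + 1 : ℕ) : ℝ≥0∞) * (1 - k * ENNReal.ofReal r ^ L)) := by
    rw [ENNReal.ofReal_mul ht.le, ENNReal.ofReal_mul (Nat.cast_nonneg _), ENNReal.ofReal_natCast,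
      ENNReal.ofReal_sub _ (by positivity), ENNReal.ofReal_one, ENNReal.ofReal_mul (by positivity),
      ENNReal.ofReal_natCast, ht_def, ENNReal.ofReal_pow hr.le]
  calc ENNReal.ofReal (1 / 4) ≤ ENNReal.ofReal (t * ((L + k + 1 : ℕ) * (1 - k * t))) := by
        refine ENNReal.ofReal_le_ofReal ?_
        calc (1 / 4 : ℝ) ≤ (k + 1) * t * (1 / 2) := by linarith
          _ ≤ (L + k + 1 : ℕ) * t * (1 - k * t) := by push_cast; gcongr <;> linarith
          _ = _ := by ring
    _ ≤ ENNReal.ofReal t * ∫⁻ ε, (tau1 L ε : ℝ≥0∞) ∂W := by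
        rw [hcast]
        gcongr
        exact natCast_mul_le_lintegral_tau1 hiid hmarg hw0 hw1 hr hL k

end RegenerationTime

lemma mul_exp_neg_div_le (c : ℝ) {r : ℝ} (hr : 0 < r) : c * Real.exp (-c / r) ≤ r := by
  have h := Real.add_one_le_exp (c / r)
  rw [neg_div, Real.exp_neg, ← div_eq_mul_inv, div_le_iff₀ (Real.exp_pos _)]
  calc c = r * (c / r) := by field_simp
    _ ≤ r * Real.exp (c / r) := by gcongr; linarith

theorem liminf_scaled_mean_regeneration_time_pos_general
    (p : ℝ) (hp : 1 / 2 < p) (hp1 : p < 1)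
    (r : ℝ) (hr : r = (1 - p) / 2)
    (w : Measure (Fin 3))
    (hw0 : w {0} = ENNReal.ofReal r) (hw1 : w {1} = ENNReal.ofReal r)
    (W : Measure (ℕ → Fin 3))
    (hiid : iIndepFun (fun i (ε : ℕ → Fin 3) => ε i) W)
    (hmarg : ∀ i : ℕ, W.map (fun ε => ε i) = w) :
    (∀ c : ℝ, 0 < c →
      ENNReal.ofReal (c * Real.exp (-c / r))
        ≤ Filter.liminf
            (fun L : ℕ => ENNReal.ofReal (r ^ L) * ∫⁻ ε, (tau1 L ε : ℝ≥0∞) ∂W)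
            (Filter.atTop ⊓ Filter.principal {L : ℕ | Even L ∧ 0 < L})) ∧
    0 < Filter.liminf
          (fun L : ℕ => ENNReal.ofReal (r ^ L) * ∫⁻ ε, (tau1 L ε : ℝ≥0∞) ∂W)
          (Filter.atTop ⊓ Filter.principal {L : ℕ | Even L ∧ 0 < L}) := by
  have hr0 : 0 < r := by rw [hr]; linarith
  have hr4 : r < 1 / 4 := by rw [hr]; linarith
  have hquarter : ENNReal.ofReal (1 / 4) ≤ Filter.liminf
      (fun L : ℕ => ENNReal.ofReal (r ^ L) * ∫⁻ ε, (tau1 L ε : ℝ≥0∞) ∂W)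
      (Filter.atTop ⊓ Filter.principal {L : ℕ | Even L ∧ 0 < L}) :=
    le_liminf_of_le (by isBoundedDefault) <| eventually_inf_principal.2 <| .of_forall
      fun L hL ↦ ofReal_quarter_le_pow_mul_lintegral_tau1 hiid hmarg hw0 hw1 hr0 hL.2
  refine ⟨fun c _ ↦ le_trans ?_ hquarter, lt_of_lt_of_le (by norm_num) hquarter⟩
  exact ENNReal.ofReal_le_ofReal ((mul_exp_neg_div_le c hr0).trans hr4.le)

/-- for every `c > 0`, the liminf over (positive) even `L → ∞` of
`r^L · E_W[τ₁^{(L)}]` is at least `c·e^{−c/r}`; in particular it is strictly positive. -/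
theorem liminf_scaled_mean_regeneration_time_pos
    (p : ℝ) (hp : 1 / 2 < p) (hp1 : p < 1)
    (r : ℝ) (hr : r = (1 - p) / 2)
    (w : Measure (Fin 3)) (hwprob : IsProbabilityMeasure w)
    (hw0 : w {0} = ENNReal.ofReal r) (hw1 : w {1} = ENNReal.ofReal r)
    (hw2 : w {2} = ENNReal.ofReal p)
    (W : Measure (ℕ → Fin 3)) (hWprob : IsProbabilityMeasure W)
    (hiid : iIndepFun (fun i (ε : ℕ → Fin 3) => ε i) W)
    (hmarg : ∀ i : ℕ, W.map (fun ε => ε i) = w) :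
    (∀ c : ℝ, 0 < c →
      ENNReal.ofReal (c * Real.exp (-c / r))
        ≤ Filter.liminf
            (fun L : ℕ => ENNReal.ofReal (r ^ L) * ∫⁻ ε, (tau1 L ε : ℝ≥0∞) ∂W)
            (Filter.atTop ⊓ Filter.principal {L : ℕ | Even L ∧ 0 < L})) ∧
    0 < Filter.liminf
          (fun L : ℕ => ENNReal.ofReal (r ^ L) * ∫⁻ ε, (tau1 L ε : ℝ≥0∞) ∂W)
          (Filter.atTop ⊓ Filter.principal {L : ℕ | Even L ∧ 0 < L}) :=
  liminf_scaled_mean_regeneration_time_pos_general p hp hp1 r hr w hw0 hw1 W hiid hmarg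
end

section
/- Let f : Ω → ℝ be a cylinder function and let μ be a Borel probability measure on Ω (with the product topology, {0,1} discrete) such that ∫ f dμ = 0. Then ⫴L_* f⫴ ≤ 2(α − β) · ⫴f⫴. -/
open MeasureTheory

/-- The configuration space `Ω = {0,1}^ℤ`. -/
abbrev Conf := ℤ → Fin 2

/-- `η^x`: the configuration obtained from `η` by flipping the state at site `x`. -/
def flipAt (x : ℤ) (η : Conf) : Conf := Function.update η x (1 - η x)

/-- `Δ_f(x)`: the maximum variation of `f` at site `x`. -/
noncomputable def mvar (f : Conf → ℝ) (x : ℤ) : ℝ := ⨆ η : Conf, |f (flipAt x η) - f η|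

/-- The triple norm `⫴f⫴ = Σ_x Δ_f(x)`. -/
noncomputable def tnorm (f : Conf → ℝ) : ℝ := ∑' x : ℤ, mvar f x

/-- The shift `τ_k`: `(τ_k η)(x) = η(x + k)`. -/
def shift (k : ℤ) (η : Conf) : Conf := fun x => η (x + k)

/-- The perturbation part of the generator of the environment process:
`(L_* f)(η) = ½(α − β)·[f(τ₁η) − f(τ₋₁η)]·(2η(0) − 1)`. -/
noncomputable def Lstar (α β : ℝ) (f : Conf → ℝ) (η : Conf) : ℝ :=
  (1 / 2) * (α - β) * (f (shift 1 η) - f (shift (-1) η)) * (2 * ((η 0 : ℕ) : ℝ) - 1)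

lemma fin2_cases (a : Fin 2) : a = 0 ∨ a = 1 := by omega
lemma fin2_flip : ∀ a b : Fin 2, a ≠ b → b = 1 - a := by decide
lemma flip_apply_ne {x y : ℤ} (h : y ≠ x) (η : Conf) : flipAt x η y = η y :=
  Function.update_of_ne h _ _
lemma flip_apply_self (x : ℤ) (η : Conf) : flipAt x η x = 1 - η x :=
  Function.update_self _ _ _
lemma shift_flip (k x : ℤ) (η : Conf) :
    shift k (flipAt x η) = flipAt (x - k) (shift k η) := by
  funext y
  unfold shift flipAt
  rw [Function.update_apply, Function.update_apply]
  by_cases h : y = x - k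
  · rw [if_pos (by omega), if_pos h]
    show (1 : Fin 2) - η x = 1 - η (x - k + k)
    congr 2
    omega
  · rw [if_neg (by omega), if_neg h]

/-- helper: mvar facts for a bounded function -/
lemma mvar_bddAbove (g : Conf → ℝ) (M : ℝ) (hM : ∀ η, |g η| ≤ M) (x : ℤ) :
    BddAbove (Set.range fun η => |g (flipAt x η) - g η|) := by
  refine ⟨2 * M, ?_⟩
  rintro _ ⟨η, rfl⟩
  calc |g (flipAt x η) - g η| ≤ |g (flipAt x η)| + |g η| := abs_sub _ _
    _ ≤ M + M := add_le_add (hM _) (hM _)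
    _ = 2 * M := by ring

lemma le_mvar (g : Conf → ℝ) (M : ℝ) (hM : ∀ η, |g η| ≤ M) (x : ℤ) (η : Conf) :
    |g (flipAt x η) - g η| ≤ mvar g x :=
  le_ciSup (mvar_bddAbove g M hM x) η

lemma mvar_nonneg (g : Conf → ℝ) (M : ℝ) (hM : ∀ η, |g η| ≤ M) (x : ℤ) :
    0 ≤ mvar g x :=
  le_trans (abs_nonneg _) (le_mvar g M hM x (fun _ => 0))


/-- for a cylinder function `f` with mean zero w.r.t. a Borel
probability measure `μ` on `Ω`, `⫴L_* f⫴ ≤ 2(α − β)·⫴f⫴`. -/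
theorem tnorm_Lstar_le
    (α β : ℝ) (hβ : 0 < β) (hβα : β < α)
    (f : Conf → ℝ)
    (hcyl : ∃ s : Finset ℤ, ∀ η η' : Conf, (∀ x ∈ s, η x = η' x) → f η = f η')
    (μ : Measure Conf) (hμ : IsProbabilityMeasure μ)
    (hmean : (∫ η, f η ∂μ) = 0) :
    tnorm (Lstar α β f) ≤ 2 * (α - β) * tnorm f := by
  obtain ⟨s, hs⟩ := hcyl
  have hαβ : (0:ℝ) < α - β := by linarith
  -- f is bounded
  obtain ⟨M, hM⟩ : ∃ M, ∀ η, |f η| ≤ M := by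
    set g : ({ x // x ∈ s } → Fin 2) → ℝ :=
      fun v => f (fun x => if h : x ∈ s then v ⟨x, h⟩ else 0) with hg
    obtain ⟨v₀, hv₀⟩ := Finite.exists_max (fun v => |g v|)
    refine ⟨|g v₀|, fun η => ?_⟩
    have : f η = g (fun x => η x.1) := by
      apply hs
      intro x hx
      simp [hg, hx]
    rw [this]
    exact hv₀ (fun x => η x.1)
  have habs_t : ∀ η : Conf, |2 * ((η 0 : ℕ) : ℝ) - 1| = 1 := by
    intro η
    rcases fin2_cases (η 0) with h | h <;> rw [h] <;> norm_num
  -- Lstar bounded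
  have hML : ∀ η, |Lstar α β f η| ≤ (α - β) * (2 * M) := by
    intro η
    have hM0 : 0 ≤ M := le_trans (abs_nonneg _) (hM (fun _ => 0))
    calc |Lstar α β f η|
        = |(1/2) * (α - β)| * |f (shift 1 η) - f (shift (-1) η)|
            * |2 * ((η 0 : ℕ) : ℝ) - 1| := by rw [Lstar, abs_mul, abs_mul]
      _ ≤ ((1/2) * (α - β)) * (2 * M) * 1 := by
          refine mul_le_mul (mul_le_mul (le_of_eq (abs_of_pos (by linarith))) ?_
            (abs_nonneg _) (by positivity)) (le_of_eq (habs_t η)) (abs_nonneg _)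
            (by positivity)
          calc |f (shift 1 η) - f (shift (-1) η)| ≤ |f (shift 1 η)| + |f (shift (-1) η)| :=
                abs_sub _ _
            _ ≤ M + M := add_le_add (hM _) (hM _)
            _ = 2 * M := by ring
      _ ≤ (α - β) * (2 * M) := by nlinarith
  have hmv_le := le_mvar f M hM
  have hmv_nn := mvar_nonneg f M hM
  have hmvL_nn := mvar_nonneg (Lstar α β f) _ hML
  -- mvar f vanishes off s
  have hmv_zero : ∀ x ∉ s, mvar f x = 0 := by
    intro x hx
    have : ∀ η : Conf, |f (flipAt x η) - f η| = 0 := by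
      intro η
      rw [hs (flipAt x η) η (fun y hy => flip_apply_ne (fun h => hx (by rw [← h]; exact hy)) η)]
      simp
    simp only [mvar, this, ciSup_const]
  set T : ℝ := ∑ x ∈ s, mvar f x with hT
  have hT_nn : 0 ≤ T := Finset.sum_nonneg (fun x _ => hmv_nn x)
  have htnormf : tnorm f = T := tsum_eq_sum (fun x hx => hmv_zero x hx)
  -- sum of mvar f over any finset is ≤ T
  have hsubsum : ∀ t : Finset ℤ, ∑ y ∈ t, mvar f y ≤ T := by
    intro t
    have h1 : ∑ y ∈ t ∩ s, mvar f y = ∑ y ∈ t, mvar f y :=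
      Finset.sum_subset (Finset.inter_subset_left)
        (fun x hx hx' => hmv_zero x (fun hxs => hx' (Finset.mem_inter.mpr ⟨hx, hxs⟩)))
    rw [← h1]
    exact Finset.sum_le_sum_of_subset_of_nonneg Finset.inter_subset_right
      (fun x hx _ => hmv_nn x)
  -- key path bound: |f ξ - f η| ≤ T
  have key : ∀ ξ η : Conf, |f ξ - f η| ≤ T := by
    intro ξ η
    have main : ∀ t : Finset ℤ,
        |f (fun x => if x ∈ t then ξ x else η x) - f η| ≤ ∑ x ∈ t, mvar f x := by
      intro t
      induction t using Finset.induction_on with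
      | empty => simp
      | @insert a t ha ih =>
        set m : Conf := fun x => if x ∈ t then ξ x else η x with hm
        have hnext : (fun x => if x ∈ insert a t then ξ x else η x)
            = Function.update m a (ξ a) := by
          funext x
          by_cases hxa : x = a
          · subst hxa; simp [Function.update_self]
          · simp [Function.update_of_ne hxa, hm, Finset.mem_insert, hxa]
        rw [hnext, Finset.sum_insert ha]
        have hma : m a = η a := by simp [hm, ha]
        have step : |f (Function.update m a (ξ a)) - f m| ≤ mvar f a := by
          by_cases hcase : ξ a = η a
          · have : Function.update m a (ξ a) = m := by
              rw [hcase, ← hma, Function.update_eq_self]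
            rw [this]
            simpa using hmv_nn a
          · have : Function.update m a (ξ a) = flipAt a m := by
              unfold flipAt
              rw [hma, ← fin2_flip (η a) (ξ a) (fun h => hcase h.symm)]
            rw [this]
            exact hmv_le a m
        calc |f (Function.update m a (ξ a)) - f η|
            ≤ |f (Function.update m a (ξ a)) - f m| + |f m - f η| := abs_sub_le _ _ _
          _ ≤ mvar f a + ∑ x ∈ t, mvar f x := add_le_add step ih
    have hfs : f (fun x => if x ∈ s then ξ x else η x) = f ξ := by
      apply hs
      intro x hx
      simp [hx]
    calc |f ξ - f η| = |f (fun x => if x ∈ s then ξ x else η x) - f η| := by rw [hfs]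
      _ ≤ T := main s
  -- per-site bound for Lstar
  have hbound : ∀ x : ℤ, mvar (Lstar α β f) x ≤
      ((α - β) / 2) * (mvar f (x - 1) + mvar f (x + 1))
        + (if x = 0 then (α - β) * T else 0) := by
    intro x
    apply ciSup_le
    intro η
    have hhalf : (0:ℝ) < (1/2) * (α - β) := by linarith
    by_cases hx : x = 0
    · subst hx
      have e1 : shift 1 (flipAt 0 η) = flipAt (-1) (shift 1 η) := by
        rw [shift_flip]; norm_num
      have e2 : shift (-1) (flipAt 0 η) = flipAt 1 (shift (-1) η) := by
        rw [shift_flip]; norm_num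
      have e0 : flipAt 0 η 0 = 1 - η 0 := flip_apply_self 0 η
      have t' : 2 * (((1 - η 0 : Fin 2) : ℕ) : ℝ) - 1 = -(2 * ((η 0 : ℕ) : ℝ) - 1) := by
        rcases fin2_cases (η 0) with h | h <;> rw [h] <;> norm_num
      have expand : Lstar α β f (flipAt 0 η) - Lstar α β f η =
          -((1/2) * (α - β) * (2 * ((η 0 : ℕ) : ℝ) - 1) *
            (((f (flipAt (-1) (shift 1 η)) - f (shift 1 η))
              + (f (shift (-1) η) - f (flipAt 1 (shift (-1) η))))
              + 2 * (f (shift 1 η) - f (shift (-1) η)))) := by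
        simp only [Lstar, e1, e2, e0, t']
        ring
      have hS : |((f (flipAt (-1) (shift 1 η)) - f (shift 1 η))
              + (f (shift (-1) η) - f (flipAt 1 (shift (-1) η))))
              + 2 * (f (shift 1 η) - f (shift (-1) η))|
          ≤ (mvar f (-1) + mvar f 1) + 2 * T := by
        refine le_trans (abs_add_le _ _) (add_le_add (le_trans (abs_add_le _ _)
          (add_le_add (hmv_le (-1) (shift 1 η)) ?_)) ?_)
        · rw [abs_sub_comm]
          exact hmv_le 1 (shift (-1) η)
        · rw [abs_mul, abs_two]
          exact mul_le_mul_of_nonneg_left (key _ _) (by norm_num)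
      rw [expand, abs_neg, abs_mul, abs_mul, habs_t η, abs_of_pos hhalf, if_pos rfl]
      have hmul := mul_le_mul_of_nonneg_left hS (le_of_lt hhalf)
      have hm1 : mvar f ((0:ℤ) - 1) = mvar f (-1) := by norm_num
      have hm2 : mvar f ((0:ℤ) + 1) = mvar f (1 : ℤ) := by norm_num
      rw [hm1, hm2]
      nlinarith [hmul]
    · have e1 : shift 1 (flipAt x η) = flipAt (x - 1) (shift 1 η) := shift_flip 1 x η
      have e2 : shift (-1) (flipAt x η) = flipAt (x + 1) (shift (-1) η) := by
        rw [shift_flip]; norm_num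
      have e0 : flipAt x η 0 = η 0 := flip_apply_ne (fun h => hx h.symm) η
      have expand : Lstar α β f (flipAt x η) - Lstar α β f η =
          (1/2) * (α - β) * (2 * ((η 0 : ℕ) : ℝ) - 1) *
            ((f (flipAt (x - 1) (shift 1 η)) - f (shift 1 η))
              - (f (flipAt (x + 1) (shift (-1) η)) - f (shift (-1) η))) := by
        simp only [Lstar, e1, e2, e0]
        ring
      have hS : |(f (flipAt (x - 1) (shift 1 η)) - f (shift 1 η))
              - (f (flipAt (x + 1) (shift (-1) η)) - f (shift (-1) η))|
          ≤ mvar f (x - 1) + mvar f (x + 1) :=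
        le_trans (abs_sub _ _) (add_le_add (hmv_le _ _) (hmv_le _ _))
      rw [expand, abs_mul, abs_mul, habs_t η, abs_of_pos hhalf, if_neg hx, add_zero]
      have hmul := mul_le_mul_of_nonneg_left hS (le_of_lt hhalf)
      nlinarith [hmul]
  -- support of mvar (Lstar f)
  set S' : Finset ℤ := ((s.image (· + 1)) ∪ (s.image (· - 1))) ∪ {0} with hS'
  have h0S' : (0:ℤ) ∈ S' := by simp [hS']
  have hout : ∀ x ∉ S', mvar (Lstar α β f) x = 0 := by
    intro x hx
    have hx0 : x ≠ 0 := by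
      intro h
      exact hx (h ▸ h0S')
    have hxm : (x - 1) ∉ s := by
      intro h
      apply hx
      have : x ∈ s.image (· + 1) := Finset.mem_image.mpr ⟨x - 1, h, by ring⟩
      exact Finset.mem_union_left _ (Finset.mem_union_left _ this)
    have hxp : (x + 1) ∉ s := by
      intro h
      apply hx
      have : x ∈ s.image (· - 1) := Finset.mem_image.mpr ⟨x + 1, h, by ring⟩
      exact Finset.mem_union_left _ (Finset.mem_union_right _ this)
    refine le_antisymm ?_ (hmvL_nn x)
    have h := hbound x
    rw [hmv_zero _ hxm, hmv_zero _ hxp, if_neg hx0] at h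
    simpa using h
  have htnormL : tnorm (Lstar α β f) = ∑ x ∈ S', mvar (Lstar α β f) x :=
    tsum_eq_sum hout
  have hinj1 : ∀ a ∈ S', ∀ b ∈ S', a - 1 = b - 1 → a = b := fun a _ b _ h => by omega
  have hinj2 : ∀ a ∈ S', ∀ b ∈ S', a + 1 = b + 1 → a = b := fun a _ b _ h => by omega
  have hsum1 : ∑ x ∈ S', mvar f (x - 1) ≤ T := by
    rw [← Finset.sum_image hinj1]
    exact hsubsum _
  have hsum2 : ∑ x ∈ S', mvar f (x + 1) ≤ T := by
    rw [← Finset.sum_image hinj2]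
    exact hsubsum _
  rw [htnormL, htnormf]
  calc ∑ x ∈ S', mvar (Lstar α β f) x
      ≤ ∑ x ∈ S', (((α - β) / 2) * (mvar f (x - 1) + mvar f (x + 1))
          + (if x = 0 then (α - β) * T else 0)) :=
        Finset.sum_le_sum (fun x _ => hbound x)
    _ = ((α - β) / 2) * (∑ x ∈ S', mvar f (x - 1))
          + ((α - β) / 2) * (∑ x ∈ S', mvar f (x + 1)) + (α - β) * T := by
        rw [Finset.sum_add_distrib, Finset.sum_ite_eq' S' 0 (fun _ => (α - β) * T),
          if_pos h0S']
        simp only [mul_add, Finset.sum_add_distrib, ← Finset.mul_sum]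
    _ ≤ ((α - β) / 2) * T + ((α - β) / 2) * T + (α - β) * T := by
        have h1 := mul_le_mul_of_nonneg_left hsum1 (by linarith : (0:ℝ) ≤ (α - β) / 2)
        have h2 := mul_le_mul_of_nonneg_left hsum2 (by linarith : (0:ℝ) ≤ (α - β) / 2)
        linarith
    _ = 2 * (α - β) * T := by ring
end
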